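/- arXiv:1506.07730 — 2 statements merged into one kernel-verified Lean document; each statement's English description precedes it below -/
import Mathlib

section
/- Let x, p ∈ ℝⁿ, β ≥ 0 and α ≥ 0. For every index i, one has pᵢ · β · sign(xᵢ + α·pᵢ) ≥ pᵢ · β · sign(xᵢ), where sign denotes the real sign function (sign(t) = 1 for t > 0, −1 for t < 0, and 0 for t = 0). Consequently, summing over i, ⟨p, β·sign(x + α·p)⟩ ≥ ⟨p, β·sign(x)⟩ (the componentwise form of Proposition 1 for the ℓ1 term g(x) = β‖x‖₁, as proved in the paper). -/
lemma real_sign_mono {a b : ℝ} (h : a ≤ b) : Real.sign a ≤ Real.sign b := by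
  unfold Real.sign
  split_ifs <;> linarith

/-- Componentwise form of Proposition 1 for the ℓ1 term `g(x) = β‖x‖₁`:
for `β ≥ 0` and `α ≥ 0`, each component satisfies
`pᵢ · β · sign(xᵢ + α·pᵢ) ≥ pᵢ · β · sign(xᵢ)`, and hence, summing over `i`,
`⟪p, β·sign(x + α·p)⟫ ≥ ⟪p, β·sign(x)⟫`. -/
theorem sign_subgradient_monotone_componentwise
    {n : ℕ} (x p : Fin n → ℝ) (β α : ℝ) (hβ : 0 ≤ β) (hα : 0 ≤ α) :
    (∀ i, p i * (β * Real.sign (x i + α * p i)) ≥ p i * (β * Real.sign (x i))) ∧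
      (∑ i, p i * (β * Real.sign (x i + α * p i)) ≥
        ∑ i, p i * (β * Real.sign (x i))) := by
  have key : ∀ i, p i * (β * Real.sign (x i + α * p i)) ≥ p i * (β * Real.sign (x i)) := by
    intro i
    rcases lt_trichotomy (p i) 0 with hp | hp | hp
    · have h1 : x i + α * p i ≤ x i := by nlinarith
      have h2 : Real.sign (x i + α * p i) ≤ Real.sign (x i) := real_sign_mono h1
      have := mul_nonneg hβ (sub_nonneg.mpr h2)
      nlinarith
    · simp [hp]
    · have h1 : x i ≤ x i + α * p i := by nlinarith
      have h2 := real_sign_mono h1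
      have := mul_nonneg hβ (sub_nonneg.mpr h2)
      nlinarith
  exact ⟨key, Finset.sum_le_sum fun i _ => key i⟩
end

section
/- Let A be a real m×n matrix, b ∈ ℝᵐ, g : ℝⁿ → ℝ convex, and x, p ∈ ℝⁿ with ⟨Ap, Ap⟩ > 0. Suppose α* > 0 satisfies the line-search stationarity condition: there exists a subgradient d' of g at x + α*·p with ⟨p, Aᵀ(A(x + α*·p) − b)⟩ + ⟨p, d'⟩ = 0. Then for every subgradient d of g at x, α* ≤ α_u := −⟨p, Aᵀ(Ax − b) + d⟩ / ⟨Ap, Ap⟩ (the upper bound on the LASSO line-search step size, equation (20) of the paper). -/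
open scoped RealInnerProductSpace
open Matrix

/-- Identification of a plain vector in `Fin k → ℝ` with a point of the Euclidean space
`ℝᵏ` (equipped with the standard inner product and the ℓ2 norm). -/
noncomputable def toEuc {k : ℕ} (v : Fin k → ℝ) : EuclideanSpace ℝ (Fin k) :=
  (WithLp.equiv 2 (Fin k → ℝ)).symm v

lemma inner_eq_dot {k : ℕ} (u v : EuclideanSpace ℝ (Fin k)) :
    ⟪u, v⟫ = (u : Fin k → ℝ) ⬝ᵥ (v : Fin k → ℝ) := by
  simp [PiLp.inner_apply, dotProduct, mul_comm]

lemma dot_expand {m n : ℕ} (A : Matrix (Fin m) (Fin n) ℝ) (b : Fin m → ℝ)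
    (x p : Fin n → ℝ) (α : ℝ) :
    p ⬝ᵥ Aᵀ.mulVec (A.mulVec (x + α • p) - b) =
      p ⬝ᵥ Aᵀ.mulVec (A.mulVec x - b) + α * (A.mulVec p ⬝ᵥ A.mulVec p) := by
  have h1 : A.mulVec (x + α • p) - b = (A.mulVec x - b) + α • A.mulVec p := by
    rw [Matrix.mulVec_add, Matrix.mulVec_smul]; abel
  rw [h1, Matrix.mulVec_add, dotProduct_add, Matrix.mulVec_smul,
    dotProduct_smul, smul_eq_mul, Matrix.dotProduct_mulVec,
    Matrix.vecMul_transpose]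
  congr 2
  rw [Matrix.dotProduct_mulVec, Matrix.vecMul_transpose]

/-- Upper bound on the LASSO line-search step size (equation (20) of the paper):
if `α* > 0` satisfies the stationarity condition
`⟪p, Aᵀ(A(x + α*·p) − b)⟫ + ⟪p, d'⟫ = 0` for some subgradient `d'` of the convex
function `g` at `x + α*·p`, then for every subgradient `d` of `g` at `x`,
`α* ≤ α_u = −⟪p, Aᵀ(Ax − b) + d⟫ / ⟪Ap, Ap⟫`. -/
theorem line_search_step_upper_bound
    {m n : ℕ} (A : Matrix (Fin m) (Fin n) ℝ) (b : EuclideanSpace ℝ (Fin m))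
    (g : EuclideanSpace ℝ (Fin n) → ℝ) (hg : ConvexOn ℝ Set.univ g)
    (x p : EuclideanSpace ℝ (Fin n))
    (hp : ⟪toEuc (A.mulVec p), toEuc (A.mulVec p)⟫ > 0)
    (αstar : ℝ) (hαstar : 0 < αstar)
    (d' : EuclideanSpace ℝ (Fin n))
    (hd' : ∀ y, ⟪d', y - (x + αstar • p)⟫ ≤ g y - g (x + αstar • p))
    (hstat : ⟪p, toEuc (Aᵀ.mulVec (toEuc (A.mulVec (x + αstar • p)) - b))⟫ +
        ⟪p, d'⟫ = 0) :
    ∀ d : EuclideanSpace ℝ (Fin n), (∀ y, ⟪d, y - x⟫ ≤ g y - g x) →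
      αstar ≤ -(⟪p, toEuc (Aᵀ.mulVec (toEuc (A.mulVec x) - b)) + d⟫) /
        ⟪toEuc (A.mulVec p), toEuc (A.mulVec p)⟫ := by
  intro d hd
  set s : ℝ := ⟪toEuc (A.mulVec p), toEuc (A.mulVec p)⟫ with hs
  have hsd : s = A.mulVec p ⬝ᵥ A.mulVec p := inner_eq_dot _ _
  -- expand the stationarity condition
  have hexpand : ⟪p, toEuc (Aᵀ.mulVec (toEuc (A.mulVec (x + αstar • p)) - b))⟫ =
      ⟪p, toEuc (Aᵀ.mulVec (toEuc (A.mulVec x) - b))⟫ + αstar * s := by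
    rw [inner_eq_dot, inner_eq_dot, hsd]
    exact dot_expand A b x p αstar
  -- monotonicity of the subdifferential
  have hmono : ⟪p, d⟫ ≤ ⟪p, d'⟫ := by
    have h1 := hd' x
    have h2 := hd (x + αstar • p)
    have hsum : ⟪d', x - (x + αstar • p)⟫ + ⟪d, (x + αstar • p) - x⟫ ≤ 0 := by
      linarith
    have e1 : x - (x + αstar • p) = (-αstar) • p := by
      rw [neg_smul]; abel
    have e2 : (x + αstar • p) - x = αstar • p := by abel
    rw [e1, e2, inner_smul_right, inner_smul_right] at hsum
    have h3 : αstar * (⟪d, p⟫ - ⟪d', p⟫) ≤ 0 := by linarith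
    have hle : ⟪d, p⟫ - ⟪d', p⟫ ≤ 0 :=
      nonpos_of_mul_nonpos_right (by linarith) hαstar
    linarith [real_inner_comm p d, real_inner_comm p d', hle]
  rw [hexpand] at hstat
  rw [inner_add_right, le_div_iff₀ hp]
  linarith
end
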